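/- arXiv:2006.09028 — 4 statements merged into one kernel-verified Lean document; each statement's English description precedes it below -/
import Mathlib

section
/- Let K be a commutative domain, a and b nonzero integers, and χ(X) = (X - v_1)⋯(X - v_r) a monic polynomial with roots v_1, ..., v_r that are units of K and with v_i - v_j a unit whenever i ≠ j. Then the following are equivalent: (1) there exists a polynomial T ∈ K[X] such that T(X)^a ≡ X^b modulo χ(X) in the localization K[X, X^{-1}]; (2) for each i, the element v_i^b admits an a-th root in K. -/
/-!
Since the roots `v i` are units, evaluation at them extends to Laurent polynomials, and since
they differ by units, the factors `X - v i` of `χ` are pairwise coprime. Together with Lagrange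
interpolation this identifies `K[X, X⁻¹] ⧸ (χ)` with `K ^ r`, hence its unit group with
`(Kˣ) ^ r`, the class of `X` going to `(v i)ᵢ`. The congruence `T ^ a ≡ X ^ b` thus splits into
the equations `T(v i) ^ a = v i ^ b`, and interpolation produces `T` from any choice of roots.
-/

open Polynomial
open scoped LaurentPolynomial

namespace Polynomial

variable {K ι : Type*} [CommRing K] [Fintype ι] {v : ι → K}

theorem prod_X_sub_C_dvd_of_eval_eq_zero (hdiff : ∀ i j, i ≠ j → IsUnit (v i - v j))
    {p : K[X]} (hp : ∀ i, p.eval (v i) = 0) : (∏ i, (X - C (v i))) ∣ p :=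
  Fintype.prod_dvd_of_coprime (fun i j hij => isCoprime_X_sub_C_of_isUnit_sub (hdiff i j hij))
    fun i => dvd_iff_isRoot.mpr (hp i)

-- Lagrange interpolation
theorem exists_eval_eq_of_isUnit_sub
    (hdiff : ∀ i j, i ≠ j → IsUnit (v i - v j)) (c : ι → K) :
    ∃ p : K[X], ∀ i, p.eval (v i) = c i := by
  classical
  refine ⟨∑ i, C (c i * Ring.inverse (∏ j ∈ Finset.univ.erase i, (v i - v j))) *
      ∏ j ∈ Finset.univ.erase i, (X - C (v j)), fun k => ?_⟩
  simp only [eval_finsetSum, eval_mul, eval_C, eval_prod, eval_sub, eval_X]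
  rw [Finset.sum_eq_single k]
  · have hunit : IsUnit (∏ j ∈ Finset.univ.erase k, (v k - v j)) :=
      IsUnit.prod_iff.mpr fun j hj => hdiff k j (Finset.ne_of_mem_erase hj).symm
    rw [mul_assoc, Ring.inverse_mul_cancel _ hunit, mul_one]
  · intro i _ hik
    rw [Finset.prod_eq_zero (f := fun j => v k - v j)
      (Finset.mem_erase.mpr ⟨hik.symm, Finset.mem_univ k⟩) (sub_self (v k)),
      mul_zero]
  · exact fun hk => absurd (Finset.mem_univ k) hk

end Polynomial

namespace LaurentPolynomial

variable {K ι : Type*} [CommRing K] {v : ι → K} (hv : ∀ i, IsUnit (v i))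

noncomputable def evalPi : K[T;T⁻¹] →+* (ι → K) :=
  RingHom.pi fun i => eval₂ (RingHom.id K) (hv i).unit

theorem evalPi_toLaurent (p : K[X]) : evalPi hv (toLaurent p) = fun i => p.eval (v i) := by
  ext i
  simp only [evalPi, RingHom.pi_apply, eval₂_toLaurent, IsUnit.unit_spec, eval₂_id]

variable [Fintype ι]

theorem ker_evalPi (hdiff : ∀ i j, i ≠ j → IsUnit (v i - v j)) :
    RingHom.ker (evalPi hv) = Ideal.span {toLaurent (∏ i, (X - Polynomial.C (v i)))} := by
  ext f
  rw [RingHom.mem_ker, Ideal.mem_span_singleton]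
  constructor
  · intro hf
    -- clear denominators: `f * T n` is a polynomial with the same roots `v i`
    obtain ⟨n, p, hp⟩ := exists_T_pow f
    have hroots : ∀ i, p.eval (v i) = 0 := fun i => by
      rw [← congrFun (evalPi_toLaurent hv p) i, hp, map_mul, hf, zero_mul, Pi.zero_apply]
    have hdvd := map_dvd toLaurent (prod_X_sub_C_dvd_of_eval_eq_zero hdiff hroots)
    rwa [hp, ← (isUnit_T (n : ℤ)).unit_spec, Units.dvd_mul_right] at hdvd
  · rintro ⟨g, rfl⟩
    ext i
    rw [map_mul, evalPi_toLaurent, Pi.mul_apply, eval_prod,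
      Finset.prod_eq_zero (Finset.mem_univ i) (by rw [eval_sub, eval_X, eval_C, sub_self]),
      zero_mul, Pi.zero_apply]

theorem evalPi_surjective (hdiff : ∀ i j, i ≠ j → IsUnit (v i - v j)) :
    Function.Surjective (evalPi hv) := fun c => by
  obtain ⟨p, hp⟩ := exists_eval_eq_of_isUnit_sub hdiff c
  exact ⟨toLaurent p, by rw [evalPi_toLaurent]; exact funext hp⟩

variable (hdiff : ∀ i j, i ≠ j → IsUnit (v i - v j))

noncomputable def quotientSpanProdEquivPi :
    K[T;T⁻¹] ⧸ Ideal.span {toLaurent (∏ i, (X - Polynomial.C (v i)) : K[X])} ≃+* (ι → K) :=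
  (Ideal.quotEquivOfEq (ker_evalPi hv hdiff).symm).trans
    (RingHom.quotientKerEquivOfSurjective (evalPi_surjective hv hdiff))

theorem quotientSpanProdEquivPi_mk (f : K[T;T⁻¹]) :
    quotientSpanProdEquivPi hv hdiff (Ideal.Quotient.mk _ f) = evalPi hv f :=
  rfl

noncomputable def unitsQuotientSpanProdEquivPi :
    (K[T;T⁻¹] ⧸ Ideal.span {toLaurent (∏ i, (X - Polynomial.C (v i)) : K[X])})ˣ ≃* (ι → Kˣ) :=
  (Units.mapEquiv (quotientSpanProdEquivPi hv hdiff).toMulEquiv).trans MulEquiv.piUnits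

theorem val_eq_mk_toLaurent_iff
    (y : (K[T;T⁻¹] ⧸ Ideal.span {toLaurent (∏ i, (X - Polynomial.C (v i)) : K[X])})ˣ) (p : K[X]) :
    (y : K[T;T⁻¹] ⧸ Ideal.span {toLaurent (∏ i, (X - Polynomial.C (v i)) : K[X])}) =
        Ideal.Quotient.mk _ (toLaurent p) ↔
      ∀ i, (unitsQuotientSpanProdEquivPi hv hdiff y i : K) = p.eval (v i) := by
  rw [← (quotientSpanProdEquivPi hv hdiff).injective.eq_iff, quotientSpanProdEquivPi_mk,
    evalPi_toLaurent, funext_iff]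
  rfl

end LaurentPolynomial

theorem stmt_2_general {K : Type*} [CommRing K] {r : ℕ} (a b : ℤ)
    (v : Fin r → K)
    (hv : ∀ i : Fin r, IsUnit (v i))
    (hdiff : ∀ i j : Fin r, i ≠ j → IsUnit (v i - v j))
    (χ : Polynomial K) (hχ : χ = ∏ i : Fin r, (X - C (v i))) :
    (∃ T : Polynomial K,
        ∃ u x : (LaurentPolynomial K ⧸ Ideal.span {Polynomial.toLaurent χ})ˣ,
          (u : LaurentPolynomial K ⧸ Ideal.span {Polynomial.toLaurent χ}) =
              Ideal.Quotient.mk (Ideal.span {Polynomial.toLaurent χ})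
                (Polynomial.toLaurent T) ∧
          (x : LaurentPolynomial K ⧸ Ideal.span {Polynomial.toLaurent χ}) =
              Ideal.Quotient.mk (Ideal.span {Polynomial.toLaurent χ})
                (Polynomial.toLaurent (X : Polynomial K)) ∧
          u ^ a = x ^ b) ↔
      (∀ i : Fin r, ∃ w : Kˣ, w ^ a = (hv i).unit ^ b) := by
  subst hχ
  set I : Ideal (LaurentPolynomial K) := Ideal.span {toLaurent (∏ i, (X - C (v i)))}
  set Φ := LaurentPolynomial.unitsQuotientSpanProdEquivPi hv hdiff
  have hX : ∀ x : (LaurentPolynomial K ⧸ I)ˣ,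
      (x : LaurentPolynomial K ⧸ I) = Ideal.Quotient.mk I (toLaurent X) ↔
        Φ x = fun i => (hv i).unit := by
    intro x
    rw [LaurentPolynomial.val_eq_mk_toLaurent_iff hv hdiff]
    simp only [Φ, eval_X, funext_iff, Units.ext_iff, IsUnit.unit_spec]
  constructor
  · rintro ⟨T, u, x, -, hx, hux⟩ i
    refine ⟨Φ u i, ?_⟩
    rw [← congrFun ((hX x).mp hx) i]
    exact congrFun (by simpa only [map_zpow] using congrArg Φ hux) i
  · intro hroot
    choose w hw using hroot
    obtain ⟨T, hT⟩ := exists_eval_eq_of_isUnit_sub hdiff fun i => (w i : K)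
    refine ⟨T, Φ.symm w, Φ.symm fun i => (hv i).unit, ?_, (hX _).mpr (Φ.apply_symm_apply _), ?_⟩
    · rw [LaurentPolynomial.val_eq_mk_toLaurent_iff hv hdiff, Φ.apply_symm_apply]
      exact fun i => (hT i).symm
    · apply Φ.injective
      ext1 i
      simp only [map_zpow, Φ.apply_symm_apply, Pi.pow_apply, hw]

/-- Existence of `T ∈ K[X]` with `T(X)^a ≡ X^b mod χ(X)` in `K[X,X⁻¹]`
is equivalent to each `v i ^ b` admitting an `a`-th root in `K`,
for `χ = ∏ (X - v i)` square-free split with unit roots. -/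
theorem stmt_2 {K : Type*} [CommRing K] [IsDomain K] {r : ℕ} (a b : ℤ)
    (ha : a ≠ 0) (hb : b ≠ 0) (v : Fin r → K)
    (hv : ∀ i : Fin r, IsUnit (v i))
    (hdiff : ∀ i j : Fin r, i ≠ j → IsUnit (v i - v j))
    (χ : Polynomial K) (hχ : χ = ∏ i : Fin r, (X - C (v i))) :
    (∃ T : Polynomial K,
        ∃ u x : (LaurentPolynomial K ⧸ Ideal.span {Polynomial.toLaurent χ})ˣ,
          (u : LaurentPolynomial K ⧸ Ideal.span {Polynomial.toLaurent χ}) =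
              Ideal.Quotient.mk (Ideal.span {Polynomial.toLaurent χ})
                (Polynomial.toLaurent T) ∧
          (x : LaurentPolynomial K ⧸ Ideal.span {Polynomial.toLaurent χ}) =
              Ideal.Quotient.mk (Ideal.span {Polynomial.toLaurent χ})
                (Polynomial.toLaurent (X : Polynomial K)) ∧
          u ^ a = x ^ b) ↔
      (∀ i : Fin r, ∃ w : Kˣ, w ^ a = (hv i).unit ^ b) :=
  stmt_2_general a b v hv hdiff χ hχ
end

section
/- Let G be a group with elements σ_0, σ_1, ..., σ_{n-1} satisfying the braid relations of type B_n: σ_0σ_1σ_0σ_1 = σ_1σ_0σ_1σ_0, σ_iσ_{i+1}σ_i = σ_{i+1}σ_iσ_{i+1} for 1 ≤ i ≤ n-2, and σ_iσ_j = σ_jσ_i whenever |i - j| ≥ 2. Define τ_1 = σ_0 and τ_i = σ_{i-1}σ_{i-2}⋯σ_1σ_0σ_1⋯σ_{i-2}σ_{i-1} for 2 ≤ i ≤ n. Then the elements τ_1, ..., τ_n pairwise commute. -/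
/-- Key braid computation: if `a b a = b a b`, `a` commutes with `t`, and
`b t b t = t b t b`, then `(b t b)` satisfies the same mixed 4-braid relation
with `a`. -/
lemma stmt_5_helper {G : Type*} [Group G] (a b t : G)
    (hba : a * b * a = b * a * b)
    (hat : a * t = t * a)
    (hbt : b * t * b * t = t * b * t * b) :
    a * (b * t * b) * a * (b * t * b) = (b * t * b) * a * (b * t * b) * a := by
  calc a * (b * t * b) * a * (b * t * b)
      = a * b * t * (b * a * b) * t * b := by group
    _ = a * b * t * (a * b * a) * t * b := by rw [← hba]
    _ = (a * b * t * a * b) * (a * t) * b := by group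
    _ = (a * b * t * a * b) * (t * a) * b := by rw [hat]
    _ = a * b * (t * a) * (b * t * a * b) := by group
    _ = a * b * (a * t) * (b * t * a * b) := by rw [← hat]
    _ = (a * b * a) * (t * b * t * a * b) := by group
    _ = (b * a * b) * (t * b * t * a * b) := by rw [hba]
    _ = b * a * (b * t * b * t) * (a * b) := by group
    _ = b * a * (t * b * t * b) * (a * b) := by rw [hbt]
    _ = (b * a * t * b * t) * (b * a * b) := by group
    _ = (b * a * t * b * t) * (a * b * a) := by rw [← hba]
    _ = (b * a * t * b) * (t * a) * (b * a) := by group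
    _ = (b * a * t * b) * (a * t) * (b * a) := by rw [← hat]
    _ = b * (a * t) * (b * a * t * b * a) := by group
    _ = b * (t * a) * (b * a * t * b * a) := by rw [hat]
    _ = b * t * (a * b * a) * (t * b * a) := by group
    _ = b * t * (b * a * b) * (t * b * a) := by rw [hba]
    _ = (b * t * b) * a * (b * t * b) * a := by group

/-- For generators `σ 0, …, σ (n-1)` satisfying the braid relations of type
`Bₙ`, the elements `τ 1, …, τ n` with `τ 1 = σ 0` and
`τ (k+1) = σ k * τ k * σ k` (i.e. `τ i = σ_{i-1}⋯σ₁σ₀σ₁⋯σ_{i-1}`)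
pairwise commute. -/
theorem stmt_5 {G : Type*} [Group G] (n : ℕ) (σ τ : ℕ → G)
    (hbraid0 : 2 ≤ n → σ 0 * σ 1 * σ 0 * σ 1 = σ 1 * σ 0 * σ 1 * σ 0)
    (hbraid : ∀ i : ℕ, 1 ≤ i → i + 1 ≤ n - 1 →
      σ i * σ (i + 1) * σ i = σ (i + 1) * σ i * σ (i + 1))
    (hcomm : ∀ i j : ℕ, i + 2 ≤ j → j ≤ n - 1 → σ i * σ j = σ j * σ i)
    (hτ1 : τ 1 = σ 0)
    (hτ : ∀ k : ℕ, 1 ≤ k → k + 1 ≤ n → τ (k + 1) = σ k * τ k * σ k) :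
    ∀ i j : ℕ, 1 ≤ i → i ≤ n → 1 ≤ j → j ≤ n → τ i * τ j = τ j * τ i := by
  -- `σ k` commutes with `τ i` whenever `i + 1 ≤ k ≤ n - 1`.
  have L1 : ∀ i k : ℕ, 1 ≤ i → i + 1 ≤ k → k ≤ n - 1 → σ k * τ i = τ i * σ k := by
    intro i
    induction i with
    | zero => intro k h; omega
    | succ m ih =>
      intro k _ h2 h3
      rcases Nat.eq_zero_or_pos m with hm | hm
      · subst hm
        show σ k * τ 1 = τ 1 * σ k
        rw [hτ1]
        exact (hcomm 0 k (by omega) h3).symm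
      · rw [hτ m hm (by omega)]
        have c1 := hcomm m k (by omega) h3
        have c2 := ih k hm (by omega) h3
        calc σ k * (σ m * τ m * σ m)
            = (σ k * σ m) * (τ m * σ m) := by group
          _ = (σ m * σ k) * (τ m * σ m) := by rw [← c1]
          _ = σ m * (σ k * τ m) * σ m := by group
          _ = σ m * (τ m * σ k) * σ m := by rw [c2]
          _ = σ m * τ m * (σ k * σ m) := by group
          _ = σ m * τ m * (σ m * σ k) := by rw [← c1]
          _ = σ m * τ m * σ m * σ k := by group
  -- Key relation: `σ k τ k σ k τ k = τ k σ k τ k σ k` for `1 ≤ k ≤ n - 1`.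
  have K : ∀ k : ℕ, 1 ≤ k → k ≤ n - 1 → σ k * τ k * σ k * τ k = τ k * σ k * τ k * σ k := by
    intro k
    induction k with
    | zero => intro h; omega
    | succ m ih =>
      intro _ h2
      rcases Nat.eq_zero_or_pos m with hm | hm
      · subst hm
        show σ 1 * τ 1 * σ 1 * τ 1 = τ 1 * σ 1 * τ 1 * σ 1
        rw [hτ1]
        exact (hbraid0 (by omega)).symm
      · rw [hτ m hm (by omega)]
        exact stmt_5_helper (σ (m + 1)) (σ m) (τ m)
          (hbraid m hm h2).symm
          (L1 m (m + 1) hm le_rfl h2)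
          (ih hm (by omega))
  -- Main statement, for `i ≤ j`.
  have M : ∀ j, j ≤ n → ∀ i, 1 ≤ i → i ≤ j → τ i * τ j = τ j * τ i := by
    intro j
    induction j with
    | zero => intro _ i h1 h2; omega
    | succ m ih =>
      intro hjn i h1 h2
      rcases Nat.lt_or_ge i (m + 1) with hi | hi
      · -- i ≤ m
        have hm : 1 ≤ m := by omega
        rw [hτ m hm hjn]
        have c2 := ih (by omega) i h1 (by omega)
        rcases Nat.lt_or_ge i m with him | him
        · have c1 := L1 i m h1 (by omega) (by omega)
          calc τ i * (σ m * τ m * σ m)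
              = (τ i * σ m) * (τ m * σ m) := by group
            _ = (σ m * τ i) * (τ m * σ m) := by rw [← c1]
            _ = σ m * (τ i * τ m) * σ m := by group
            _ = σ m * (τ m * τ i) * σ m := by rw [c2]
            _ = σ m * τ m * (τ i * σ m) := by group
            _ = σ m * τ m * (σ m * τ i) := by rw [← c1]
            _ = σ m * τ m * σ m * τ i := by group
        · have him' : i = m := by omega
          subst him'
          have k := K i h1 (by omega)
          calc τ i * (σ i * τ i * σ i)
              = τ i * σ i * τ i * σ i := by group
            _ = σ i * τ i * σ i * τ i := k.symm
      · have : i = m + 1 := by omega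
        subst this
        rfl
  intro i j hi hin hj hjn
  rcases le_or_gt i j with h | h
  · exact M j hjn i hi h
  · exact (M i hin j hj h.le).symm
end

section
/- Let G be a group with elements σ_1, ..., σ_m satisfying the braid relations of type A_m (σ_iσ_{i+1}σ_i = σ_{i+1}σ_iσ_{i+1}, and σ_iσ_j = σ_jσ_i for |i - j| ≥ 2). Define Δ_0 = 1 and Δ_k = Δ_{k-1}·σ_kσ_{k-1}⋯σ_1 for 1 ≤ k ≤ m. Then Δ_{m-1}^2 · σ_m σ_{m-1} ⋯ σ_2 σ_1^2 σ_2 ⋯ σ_{m-1} σ_m = Δ_m^2. -/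
/-- In a type `Aₘ` Artin quotient, with `desc k = σ k ⋯ σ 1`,
`asc k = σ 1 ⋯ σ k`, and `Δ k = Δ (k-1) * desc k`, one has
`Δ_{m-1}² * (σ_m ⋯ σ_2 σ_1² σ_2 ⋯ σ_m) = Δ_m²`, the middle word being
`desc m * asc m`. -/
theorem stmt_7 {G : Type*} [Group G] (m : ℕ) (hm : 1 ≤ m) (σ desc asc Δ : ℕ → G)
    (hbraid : ∀ i : ℕ, 1 ≤ i → i + 1 ≤ m →
      σ i * σ (i + 1) * σ i = σ (i + 1) * σ i * σ (i + 1))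
    (hcomm : ∀ i j : ℕ, 1 ≤ i → i + 2 ≤ j → j ≤ m → σ i * σ j = σ j * σ i)
    (hdesc0 : desc 0 = 1)
    (hdesc : ∀ k : ℕ, k + 1 ≤ m → desc (k + 1) = σ (k + 1) * desc k)
    (hasc0 : asc 0 = 1)
    (hasc : ∀ k : ℕ, k + 1 ≤ m → asc (k + 1) = asc k * σ (k + 1))
    (hΔ0 : Δ 0 = 1)
    (hΔ : ∀ k : ℕ, k + 1 ≤ m → Δ (k + 1) = Δ k * desc (k + 1)) :
    Δ (m - 1) ^ 2 * (desc m * asc m) = Δ m ^ 2 := by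
  -- σ l commutes with desc k when k + 2 ≤ l ≤ m
  have Cdesc : ∀ k l : ℕ, k + 2 ≤ l → l ≤ m → σ l * desc k = desc k * σ l := by
    intro k
    induction k with
    | zero => intro l _ _; rw [hdesc0, one_mul, mul_one]
    | succ k ih =>
      intro l hl hlm
      calc σ l * desc (k + 1) = σ l * σ (k + 1) * desc k := by
            rw [hdesc k (by omega), mul_assoc]
        _ = σ (k + 1) * σ l * desc k := by
            rw [← hcomm (k + 1) l (by omega) (by omega) hlm]
        _ = σ (k + 1) * desc k * σ l := by
            rw [mul_assoc, ih l (by omega) hlm, mul_assoc]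
        _ = desc (k + 1) * σ l := by rw [← hdesc k (by omega)]
  -- σ l commutes with asc k when k + 2 ≤ l ≤ m
  have Casc : ∀ k l : ℕ, k + 2 ≤ l → l ≤ m → σ l * asc k = asc k * σ l := by
    intro k
    induction k with
    | zero => intro l _ _; rw [hasc0, one_mul, mul_one]
    | succ k ih =>
      intro l hl hlm
      calc σ l * asc (k + 1) = σ l * asc k * σ (k + 1) := by
            rw [hasc k (by omega), mul_assoc]
        _ = asc k * σ l * σ (k + 1) := by rw [ih l (by omega) hlm]
        _ = asc k * σ (k + 1) * σ l := by
            rw [mul_assoc, ← hcomm (k + 1) l (by omega) (by omega) hlm, mul_assoc]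
        _ = asc (k + 1) * σ l := by rw [← hasc k (by omega)]
  -- σ l commutes with Δ k when k + 2 ≤ l ≤ m
  have CΔ : ∀ k l : ℕ, k + 2 ≤ l → l ≤ m → σ l * Δ k = Δ k * σ l := by
    intro k
    induction k with
    | zero => intro l _ _; rw [hΔ0, one_mul, mul_one]
    | succ k ih =>
      intro l hl hlm
      calc σ l * Δ (k + 1) = σ l * Δ k * desc (k + 1) := by
            rw [hΔ k (by omega), mul_assoc]
        _ = Δ k * σ l * desc (k + 1) := by rw [ih l (by omega) hlm]
        _ = Δ k * desc (k + 1) * σ l := by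
            rw [mul_assoc, Cdesc (k + 1) l (by omega) hlm, mul_assoc]
        _ = Δ (k + 1) * σ l := by rw [← hΔ k (by omega)]
  -- conjugation by desc shifts generator indices down
  have D : ∀ k : ℕ, k + 1 ≤ m → ∀ i : ℕ, 1 ≤ i → i ≤ k →
      desc (k + 1) * σ (i + 1) = σ i * desc (k + 1) := by
    intro k
    induction k with
    | zero => intro _ i hi1 hi0; omega
    | succ k ih =>
      intro hk i hi1 hik
      rcases Nat.lt_or_ge i (k + 1) with hlt | hge
      · -- i ≤ k : use induction hypothesis
        calc desc (k + 2) * σ (i + 1)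
            = σ (k + 2) * (desc (k + 1) * σ (i + 1)) := by
              rw [hdesc (k + 1) hk, mul_assoc]
          _ = σ (k + 2) * (σ i * desc (k + 1)) := by
              rw [ih (by omega) i hi1 (by omega)]
          _ = σ i * σ (k + 2) * desc (k + 1) := by
              rw [← mul_assoc, ← hcomm i (k + 2) hi1 (by omega) hk]
          _ = σ i * desc (k + 2) := by rw [mul_assoc, ← hdesc (k + 1) hk]
      · -- i = k + 1
        have hieq : i = k + 1 := by omega
        subst hieq
        calc desc (k + 2) * σ (k + 2)
            = σ (k + 2) * (σ (k + 1) * desc k) * σ (k + 2) := by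
              rw [hdesc (k + 1) hk, hdesc k (by omega)]
          _ = σ (k + 2) * σ (k + 1) * (desc k * σ (k + 2)) := by
              rw [mul_assoc, mul_assoc, mul_assoc]
          _ = σ (k + 2) * σ (k + 1) * (σ (k + 2) * desc k) := by
              rw [Cdesc k (k + 2) (by omega) hk]
          _ = σ (k + 2) * σ (k + 1) * σ (k + 2) * desc k := by
              group
          _ = σ (k + 1) * σ (k + 2) * σ (k + 1) * desc k := by
              rw [← hbraid (k + 1) (by omega) hk]
          _ = σ (k + 1) * (σ (k + 2) * (σ (k + 1) * desc k)) := by group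
          _ = σ (k + 1) * desc (k + 2) := by
              rw [← hdesc k (by omega)]
              rw [show k + 1 + 1 = k + 2 from rfl] at hk ⊢
              rw [← hdesc (k + 1) hk]
  -- conjugation by asc shifts generator indices up
  have A : ∀ k : ℕ, k + 1 ≤ m → ∀ i : ℕ, 1 ≤ i → i ≤ k →
      asc (k + 1) * σ i = σ (i + 1) * asc (k + 1) := by
    intro k
    induction k with
    | zero => intro _ i hi1 hi0; omega
    | succ k ih =>
      intro hk i hi1 hik
      rcases Nat.lt_or_ge i (k + 1) with hlt | hge
      · calc asc (k + 2) * σ i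
            = asc (k + 1) * (σ (k + 2) * σ i) := by
              rw [hasc (k + 1) hk, mul_assoc]
          _ = asc (k + 1) * σ i * σ (k + 2) := by
              rw [← hcomm i (k + 2) hi1 (by omega) hk, mul_assoc]
          _ = σ (i + 1) * asc (k + 1) * σ (k + 2) := by
              rw [ih (by omega) i hi1 (by omega)]
          _ = σ (i + 1) * asc (k + 2) := by
              rw [mul_assoc, ← hasc (k + 1) hk]
      · have hieq : i = k + 1 := by omega
        subst hieq
        calc asc (k + 2) * σ (k + 1)
            = asc k * (σ (k + 1) * σ (k + 2) * σ (k + 1)) := by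
              rw [hasc (k + 1) hk, hasc k (by omega), mul_assoc, mul_assoc,
                ← mul_assoc (σ (k + 1))]
          _ = asc k * (σ (k + 2) * σ (k + 1) * σ (k + 2)) := by
              rw [hbraid (k + 1) (by omega) hk]
          _ = asc k * σ (k + 2) * (σ (k + 1) * σ (k + 2)) := by
              rw [← mul_assoc, ← mul_assoc, mul_assoc (asc k * σ (k + 2))]
          _ = σ (k + 2) * asc k * (σ (k + 1) * σ (k + 2)) := by
              rw [← Casc k (k + 2) (by omega) hk]
          _ = σ (k + 2) * asc (k + 2) := by
              rw [mul_assoc, ← mul_assoc (asc k), ← hasc k (by omega),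
                ← hasc (k + 1) hk]
  -- Δ (k+1) = asc (k+1) * Δ k
  have hAΔ : ∀ k : ℕ, k + 1 ≤ m → Δ (k + 1) = asc (k + 1) * Δ k := by
    intro k
    induction k with
    | zero =>
      intro hk
      rw [hΔ 0 hk, hdesc 0 hk, hasc 0 hk, hΔ0, hdesc0, hasc0]
      group
    | succ k ih =>
      intro hk
      rw [show k + 1 + 1 = k + 2 from rfl] at hk ⊢
      calc Δ (k + 2) = asc (k + 1) * Δ k * (σ (k + 2) * desc (k + 1)) := by
            rw [hΔ (k + 1) hk, ih (by omega), hdesc (k + 1) hk]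
        _ = asc (k + 1) * (Δ k * σ (k + 2)) * desc (k + 1) := by
            rw [mul_assoc, mul_assoc, mul_assoc]
        _ = asc (k + 1) * (σ (k + 2) * Δ k) * desc (k + 1) := by
            rw [← CΔ k (k + 2) (by omega) hk]
        _ = asc (k + 1) * σ (k + 2) * (Δ k * desc (k + 1)) := by group
        _ = asc (k + 2) * Δ (k + 1) := by
            rw [← hasc (k + 1) hk, ← hΔ k (by omega)]
  -- Δ k reverses generator indices
  have R : ∀ k : ℕ, k ≤ m → ∀ i j : ℕ, 1 ≤ i → 1 ≤ j → i + j = k + 1 →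
      Δ k * σ i = σ j * Δ k := by
    intro k
    induction k with
    | zero => intro _ i j hi hj hij; omega
    | succ k ih =>
      intro hk i j hi hj hij
      rcases Nat.lt_or_ge 1 i with hlt | hge
      · -- i ≥ 2
        obtain ⟨i', rfl⟩ : ∃ i', i = i' + 1 + 1 := ⟨i - 2, by omega⟩
        calc Δ (k + 1) * σ (i' + 1 + 1)
            = Δ k * (desc (k + 1) * σ (i' + 1 + 1)) := by
              rw [hΔ k hk, mul_assoc]
          _ = Δ k * (σ (i' + 1) * desc (k + 1)) := by
              rw [D k hk (i' + 1) (by omega) (by omega)]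
          _ = σ j * Δ k * desc (k + 1) := by
              rw [← mul_assoc, ih (by omega) (i' + 1) j (by omega) hj (by omega)]
          _ = σ j * Δ (k + 1) := by rw [mul_assoc, ← hΔ k hk]
      · have hieq : i = 1 := by omega
        subst hieq
        have hjeq : j = k + 1 := by omega
        subst hjeq
        rcases Nat.eq_zero_or_pos k with hk0 | hkpos
        · subst hk0
          rw [hΔ 0 hk, hdesc 0 hk, hΔ0, hdesc0, one_mul, mul_one]
        · calc Δ (k + 1) * σ 1
              = asc (k + 1) * (Δ k * σ 1) := by rw [hAΔ k hk, mul_assoc]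
            _ = asc (k + 1) * (σ k * Δ k) := by
                rw [ih (by omega) 1 k (by omega) hkpos (by omega)]
            _ = σ (k + 1) * asc (k + 1) * Δ k := by
                rw [← mul_assoc, A k hk k hkpos le_rfl]
            _ = σ (k + 1) * Δ (k + 1) := by rw [mul_assoc, ← hAΔ k hk]
  -- Δ m ^ 2 commutes with every generator
  have cent : ∀ i : ℕ, 1 ≤ i → i ≤ m → Δ m ^ 2 * σ i = σ i * Δ m ^ 2 := by
    intro i hi1 him
    have hj : 1 ≤ m + 1 - i := by omega
    calc Δ m ^ 2 * σ i = Δ m * (Δ m * σ i) := by rw [sq, mul_assoc]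
      _ = Δ m * (σ (m + 1 - i) * Δ m) := by
          rw [R m le_rfl i (m + 1 - i) hi1 hj (by omega)]
      _ = σ i * Δ m * Δ m := by
          rw [← mul_assoc, R m le_rfl (m + 1 - i) i hj hi1 (by omega)]
      _ = σ i * Δ m ^ 2 := by rw [mul_assoc, ← sq]
  -- Δ m ^ 2 commutes with desc k
  have centdesc : ∀ k : ℕ, k ≤ m → Δ m ^ 2 * desc k = desc k * Δ m ^ 2 := by
    intro k
    induction k with
    | zero => intro _; rw [hdesc0, one_mul, mul_one]
    | succ k ih =>
      intro hk
      calc Δ m ^ 2 * desc (k + 1) = Δ m ^ 2 * σ (k + 1) * desc k := by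
            rw [hdesc k hk, mul_assoc]
        _ = σ (k + 1) * (Δ m ^ 2 * desc k) := by
            rw [cent (k + 1) (by omega) hk, mul_assoc]
        _ = σ (k + 1) * desc k * Δ m ^ 2 := by rw [ih (by omega), mul_assoc]
        _ = desc (k + 1) * Δ m ^ 2 := by rw [← hdesc k hk]
  -- Δ m ^ 2 commutes with Δ k
  have centΔ : ∀ k : ℕ, k ≤ m → Δ m ^ 2 * Δ k = Δ k * Δ m ^ 2 := by
    intro k
    induction k with
    | zero => intro _; rw [hΔ0, one_mul, mul_one]
    | succ k ih =>
      intro hk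
      calc Δ m ^ 2 * Δ (k + 1) = Δ m ^ 2 * Δ k * desc (k + 1) := by
            rw [hΔ k hk, mul_assoc]
        _ = Δ k * (Δ m ^ 2 * desc (k + 1)) := by rw [ih (by omega), mul_assoc]
        _ = Δ k * desc (k + 1) * Δ m ^ 2 := by rw [centdesc (k + 1) hk, mul_assoc]
        _ = Δ (k + 1) * Δ m ^ 2 := by rw [← hΔ k hk]
  -- finish
  obtain ⟨n, rfl⟩ : ∃ n, m = n + 1 := ⟨m - 1, by omega⟩
  have h1 : Δ (n + 1) = Δ n * desc (n + 1) := hΔ n le_rfl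
  have h2 : Δ (n + 1) = asc (n + 1) * Δ n := hAΔ n le_rfl
  have hdescm : desc (n + 1) = (Δ n)⁻¹ * Δ (n + 1) := by rw [h1]; group
  have hascm : asc (n + 1) = Δ (n + 1) * (Δ n)⁻¹ := by rw [h2]; group
  have hc : Δ (n + 1) ^ 2 * Δ n = Δ n * Δ (n + 1) ^ 2 := centΔ n (by omega)
  simp only [Nat.add_sub_cancel]
  rw [hdescm, hascm]
  calc Δ n ^ 2 * ((Δ n)⁻¹ * Δ (n + 1) * (Δ (n + 1) * (Δ n)⁻¹))
      = Δ n * Δ (n + 1) ^ 2 * (Δ n)⁻¹ := by rw [sq, sq]; group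
    _ = Δ (n + 1) ^ 2 * Δ n * (Δ n)⁻¹ := by rw [← hc]
    _ = Δ (n + 1) ^ 2 := by group
end

section
/- Let G be a group containing elements s, t, u, x, y satisfying: x = t^{-1}st, y = sts^{-1}, the Artin relations sus = usu and tut = utu, the length-4 Artin relations xuxu = uxux and uyuy = yuyu, and the cyclic relations st = tx = xy = ys. Then the relation stustustu = tstustust holds in G. -/
/-- The steering-wheel presentation of the braid group of `G₂₄` implies the
Bessis–Michel relation `stustustu = tstustust`. -/
theorem stmt_8 {G : Type*} [Group G] (s t u x y : G)
    (hx : x = t⁻¹ * s * t) (hy : y = s * t * s⁻¹)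
    (hsus : s * u * s = u * s * u) (htut : t * u * t = u * t * u)
    (hxu : x * u * x * u = u * x * u * x) (huy : u * y * u * y = y * u * y * u)
    (hst : s * t = t * x) (htx : t * x = x * y) (hxy : x * y = y * s) :
    s * t * u * s * t * u * s * t * u = t * s * t * u * s * t * u * s * t := by
  have hsy : s * t = y * s := (hst.trans htx).trans hxy
  have hxyst : x * y = s * t := (hst.trans htx).symm
  calc s * t * u * s * t * u * s * t * u
      = (s*t) * (u*s*t*u*s*t*u) := by simp only [mul_assoc]
    _ = (t*x) * (u*s*t*u*s*t*u) := by rw [hst]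
    _ = (t*x*u) * (s*t) * (u*s*t*u) := by simp only [mul_assoc]
    _ = (t*x*u) * (y*s) * (u*s*t*u) := by rw [hsy]
    _ = (t*x*u*y) * (s*u*s) * (t*u) := by simp only [mul_assoc]
    _ = (t*x*u*y) * (u*s*u) * (t*u) := by rw [hsus]
    _ = (t*x*u*y*u*s) * (u*t*u) := by simp only [mul_assoc]
    _ = (t*x*u*y*u*s) * (t*u*t) := by rw [← htut]
    _ = (t*x*u*y*u) * (s*t) * (u*t) := by simp only [mul_assoc]
    _ = (t*x*u*y*u) * (y*s) * (u*t) := by rw [hsy]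
    _ = (t*x) * (u*y*u*y) * (s*u*t) := by simp only [mul_assoc]
    _ = (t*x) * (y*u*y*u) * (s*u*t) := by rw [huy]
    _ = (t*x*y*u*y) * (u*s*u) * t := by simp only [mul_assoc]
    _ = (t*x*y*u*y) * (s*u*s) * t := by rw [← hsus]
    _ = t * (x*y) * (u*y*s*u*s*t) := by simp only [mul_assoc]
    _ = t * (s*t) * (u*y*s*u*s*t) := by rw [hxyst]
    _ = (t*s*t*u) * (y*s) * (u*s*t) := by simp only [mul_assoc]
    _ = (t*s*t*u) * (s*t) * (u*s*t) := by rw [← hsy]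
    _ = t * s * t * u * s * t * u * s * t := by simp only [mul_assoc]
end
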